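/- For every m ∈ ℕ there exists a finite set B of finite tournaments such that for every finite tournament T: i(T) ≤ m if and only if no member of B embeds into T. (The class of finite tournaments of inversion index at most m has only finitely many bounds up to isomorphism.) -/

import Mathlib

/-- A tournament on a vertex set `V`: a loopless directed graph such that for all
distinct `x, y` exactly one of `(x,y)`, `(y,x)` is an arc. -/
structure Tournament (V : Type*) where
  rel : V → V → Prop
  irrefl : ∀ x, ¬ rel x x
  total : ∀ x y, x ≠ y → rel x y ∨ rel y x
  asymm : ∀ x y, rel x y → ¬ rel y x

namespace Tournament

variable {V : Type*} {W : Type*}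

/-- The tournament obtained from `T` by reversing all arcs both of whose
endpoints lie in `X`. -/
def inv (T : Tournament V) (X : Set V) : Tournament V where
  rel x y := (x ∈ X ∧ y ∈ X ∧ T.rel y x) ∨ ((x ∉ X ∨ y ∉ X) ∧ T.rel x y)
  irrefl x := by have := T.irrefl x; tauto
  total x y hxy := by
    have := T.total x y hxy
    by_cases hx : x ∈ X <;> by_cases hy : y ∈ X <;> tauto
  asymm x y := by have h1 := T.asymm x y; have h2 := T.asymm y x; tauto

/-- Successive inversions along a finite sequence of subsets (`X_0` first). -/
def invSeq (T : Tournament V) (Xs : List (Set V)) : Tournament V :=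
  Xs.foldl Tournament.inv T

/-- A tournament is acyclic (transitive) when its arc relation is transitive,
i.e. a strict linear order. -/
def IsAcyclic (T : Tournament V) : Prop :=
  ∀ x y z, T.rel x y → T.rel y z → T.rel x z

/-- The inversion index: the least number of subsets to be inverted to reach an
acyclic tournament. -/
noncomputable def index (T : Tournament V) : ℕ :=
  sInf {m | ∃ Xs : List (Set V), Xs.length = m ∧ (T.invSeq Xs).IsAcyclic}

/-- Induced subtournament on a set of vertices. -/
def restrict (T : Tournament V) (A : Set V) : Tournament A where
  rel x y := T.rel x y
  irrefl x := T.irrefl x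
  total x y hxy := T.total x y (fun h => hxy (Subtype.ext h))
  asymm x y := T.asymm x y

/-- `T − x`: the subtournament induced on `V ∖ {x}`. -/
def erase (T : Tournament V) (x : V) : Tournament {y : V // y ≠ x} :=
  T.restrict {y | y ≠ x}

/-- `S` embeds into `T`: `S` is isomorphic to the subtournament of `T` induced on
some subset of the vertices of `T`. -/
def Embeds (S : Tournament V) (T : Tournament W) : Prop :=
  ∃ f : V → W, Function.Injective f ∧ ∀ x y, S.rel x y ↔ T.rel (f x) (f y)

/-- Isomorphism of tournaments. -/
def Iso (S : Tournament V) (T : Tournament W) : Prop :=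
  ∃ e : V ≃ W, ∀ x y, S.rel x y ↔ T.rel (e x) (e y)

/-- The dual tournament, obtained by reversing all arcs. -/
def dual (T : Tournament V) : Tournament V where
  rel x y := T.rel y x
  irrefl x := T.irrefl x
  total x y hxy := (T.total x y hxy).symm
  asymm x y h := T.asymm y x h

/-- `X` is an interval of `T`. -/
def IsInterval (T : Tournament V) (X : Set V) : Prop :=
  ∀ y ∉ X, (∀ x ∈ X, T.rel x y) ∨ (∀ x ∈ X, T.rel y x)

/-- A tournament is indecomposable when all its intervals are trivial. -/
def Indecomposable (T : Tournament V) : Prop :=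
  ∀ X : Set V, T.IsInterval X → X = ∅ ∨ X = Set.univ ∨ ∃ x, X = {x}

end Tournament

/-- The transitive tournament `n̲` on `{0, …, n−1}`, with arcs `(i,j)` for `i < j`. -/
def linear (n : ℕ) : Tournament (Fin n) where
  rel x y := x < y
  irrefl x := lt_irrefl x
  total _ _ h := lt_or_gt_of_ne h
  asymm _ _ h := lt_asymm h

/-- `2ℕ_{<k} = {0, 2, …, 2(k−1)}` as a subset of `Fin N`. -/
def evensLT {N : ℕ} (k : ℕ) : Set (Fin N) := {i | (i : ℕ) % 2 = 0 ∧ (i : ℕ) < 2 * k}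

/-- `2ℕ_{<k}+1 = {1, 3, …, 2k−1}` as a subset of `Fin N`. -/
def oddsLT {N : ℕ} (k : ℕ) : Set (Fin N) := {i | (i : ℕ) % 2 = 1 ∧ (i : ℕ) < 2 * k}

/-!
If `T.index ≤ m`, label each vertex by the set of inversions containing it and number the
vertices along the acyclic tournament the inversions produce: the arc between two vertices is
then determined by their order and the parity of the overlap of their labels, so `T` is read off
a word over the finite alphabet `Finset (Fin m)`. Deleting a vertex `v` from a bound leaves index
`≤ m`, so every bound is read off a word over a finite alphabet that also records the arcs at `v`.
Subwords give subtournaments, so by Higman's lemma an infinite family of bounds would contain one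
embedded in a strictly larger one, hence in a proper subtournament of it, of index `≤ m`. Bounds
therefore have bounded size, and there are finitely many of them.
-/

open Finset
open scoped Classical

namespace Tournament

variable {V W : Type*}

theorem rel_injective : Function.Injective (rel : Tournament V → V → V → Prop) := by
  rintro ⟨_⟩ ⟨_⟩ h
  congr

instance [Finite V] : Finite (Tournament V) := .of_injective _ rel_injective

theorem rel_iff_not_rel {T : Tournament V} {x y : V} (hxy : x ≠ y) :
    T.rel x y ↔ ¬ T.rel y x :=
  ⟨T.asymm x y, (T.total x y hxy).resolve_right⟩

def comap (T : Tournament W) (f : V → W) (hf : Function.Injective f) : Tournament V where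
  rel x y := T.rel (f x) (f y)
  irrefl _ := T.irrefl _
  total _ _ h := T.total _ _ (hf.ne h)
  asymm _ _ := T.asymm _ _

theorem comap_embeds (T : Tournament W) {f : V → W} (hf : Function.Injective f) :
    (T.comap f hf).Embeds T :=
  ⟨f, hf, fun _ _ => Iff.rfl⟩

theorem embeds_comap_equiv (T : Tournament W) (e : V ≃ W) :
    T.Embeds (T.comap e e.injective) :=
  ⟨e.symm, e.symm.injective, fun x y => by simp [comap]⟩

theorem Embeds.trans {U : Type*} {S : Tournament U} {T : Tournament V} {R : Tournament W}
    (hST : S.Embeds T) (hTR : T.Embeds R) : S.Embeds R := by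
  obtain ⟨f, hf, hfrel⟩ := hST
  obtain ⟨g, hg, hgrel⟩ := hTR
  exact ⟨g ∘ f, hg.comp hf, fun x y => (hfrel x y).trans (hgrel _ _)⟩

theorem Iso.embeds {S : Tournament V} {T : Tournament W} (h : S.Iso T) : S.Embeds T :=
  let ⟨e, he⟩ := h
  ⟨e, e.injective, he⟩

theorem Iso.symm {S : Tournament V} {T : Tournament W} (h : S.Iso T) : T.Iso S :=
  let ⟨e, he⟩ := h
  ⟨e.symm, fun x y => by simp [he]⟩

theorem erase_embeds (T : Tournament V) (v : V) : (T.erase v).Embeds T :=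
  ⟨Subtype.val, Subtype.val_injective, fun _ _ => Iff.rfl⟩

theorem Embeds.exists_embeds_erase [Finite W] {S : Tournament V} {T : Tournament W}
    (h : S.Embeds T) (hcard : Nat.card V < Nat.card W) : ∃ w, S.Embeds (T.erase w) := by
  obtain ⟨f, hf, hfrel⟩ := h
  obtain ⟨w, hw⟩ : ∃ w, ∀ x, f x ≠ w := by
    by_contra! hsurj
    have := Finite.of_injective f hf
    exact hcard.not_ge (Nat.card_le_card_of_surjective f hsurj)
  exact ⟨w, fun x => ⟨f x, hw x⟩, fun _ _ h => hf (congrArg Subtype.val h), hfrel⟩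

theorem inv_rel_iff {T : Tournament V} {X : Set V} {x y : V} (hxy : x ≠ y) :
    (T.inv X).rel x y ↔ (T.rel x y ↔ ¬ (x ∈ X ∧ y ∈ X)) := by
  have := rel_iff_not_rel (T := T) hxy.symm
  simp only [inv]
  tauto

theorem inv_empty (T : Tournament V) : T.inv ∅ = T :=
  rel_injective <| by ext; simp [inv]

theorem invSeq_cons (T : Tournament V) (X : Set V) (Xs : List (Set V)) :
    T.invSeq (X :: Xs) = (T.inv X).invSeq Xs := rfl

theorem invSeq_append (T : Tournament V) (Xs Ys : List (Set V)) :
    T.invSeq (Xs ++ Ys) = (T.invSeq Xs).invSeq Ys :=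
  List.foldl_append

theorem invSeq_replicate_empty (T : Tournament V) (k : ℕ) :
    T.invSeq (List.replicate k ∅) = T := by
  induction k with
  | zero => rfl
  | succ k ih => rwa [List.replicate_succ, invSeq_cons, inv_empty]

theorem invSeq_ofFn_rel_iff {k : ℕ} (T : Tournament V) (g : Fin k → Set V) {x y : V}
    (hxy : x ≠ y) :
    (T.invSeq (List.ofFn g)).rel x y ↔ (T.rel x y ↔ Even #{i | x ∈ g i ∧ y ∈ g i}) := by
  induction k generalizing T with
  | zero => simp [Tournament.invSeq]
  | succ k ih =>
    rw [List.ofFn_succ, invSeq_cons, ih, inv_rel_iff hxy, Fin.card_filter_univ_succ']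
    split_ifs with h0 <;>
      simp only [h0, add_comm 1, zero_add, Nat.even_add_one, not_false_eq_true] <;> tauto

theorem invSeq_map_preimage_rel_iff {S : Tournament V} {T : Tournament W} {f : V → W}
    (hrel : ∀ x y, S.rel x y ↔ T.rel (f x) (f y)) (Xs : List (Set W)) (x y : V) :
    (S.invSeq (Xs.map (f ⁻¹' ·))).rel x y ↔ (T.invSeq Xs).rel (f x) (f y) := by
  induction Xs generalizing S T with
  | nil => exact hrel x y
  | cons X Xs ih =>
    refine ih (fun x y => ?_)
    simp only [inv, Set.mem_preimage, hrel]

theorem isAcyclic_of_rel_imp_lt {α : Type*} [Preorder α] {T : Tournament V} {f : V → α}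
    (h : ∀ x y, T.rel x y → f x < f y) : T.IsAcyclic := by
  intro x y z hxy hyz
  have hxz := (h x y hxy).trans (h y z hyz)
  exact (T.total x z (fun e => (e ▸ hxz).false)).resolve_right fun hzx => (h z x hzx).asymm hxz

theorem IsAcyclic.exists_equiv_fin [Finite V] {T : Tournament V} (hT : T.IsAcyclic) :
    ∃ (n : ℕ) (e : Fin n ≃ V), ∀ i j, T.rel (e i) (e j) ↔ i < j := by
  have : Fintype V := .ofFinite V
  have : IsStrictTotalOrder V T.rel :=
    { trichotomous := fun x y hxy hyx => by_contra fun h => (T.total x y h).elim hxy hyx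
      irrefl := T.irrefl
      trans := hT }
  let _ := linearOrderOfSTO T.rel
  exact ⟨_, (Fintype.orderIsoFinOfCardEq V rfl).toEquiv,
    fun i j => (Fintype.orderIsoFinOfCardEq V rfl).lt_iff_lt⟩

noncomputable def backArcs [Fintype V] (f : V → ℕ) (T : Tournament V) : Finset (V × V) :=
  {p | f p.1 < f p.2 ∧ T.rel p.2 p.1}

theorem backArcs_inv_pair [Fintype V] {f : V → ℕ} (hf : Function.Injective f)
    {T : Tournament V} {a b : V} (hab : (a, b) ∈ backArcs f T) :
    backArcs f (T.inv {a, b}) = (backArcs f T).erase (a, b) := by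
  simp only [backArcs, mem_filter, mem_univ, true_and] at hab
  ext ⟨x, y⟩
  simp only [backArcs, mem_filter, mem_univ, true_and, mem_erase, inv, Set.mem_insert_iff,
    Set.mem_singleton_iff, ne_eq, Prod.mk.injEq]
  have := T.asymm x y
  have := T.asymm y x
  have := @hf a b
  grind

theorem exists_isAcyclic_invSeq [Finite V] (T : Tournament V) :
    ∃ Xs : List (Set V), (T.invSeq Xs).IsAcyclic := by
  have : Fintype V := .ofFinite V
  obtain ⟨f, hf⟩ : ∃ f : V → ℕ, Function.Injective f :=
    ⟨_, Fin.val_injective.comp (Fintype.equivFin V).injective⟩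
  induction hn : #(backArcs f T) generalizing T with
  | zero =>
    refine ⟨[], isAcyclic_of_rel_imp_lt (f := f) fun x y (hxy : T.rel x y) => ?_⟩
    have hyx : (y, x) ∉ backArcs f T := by simp [card_eq_zero.mp hn]
    simp only [backArcs, mem_filter, mem_univ, true_and, not_and] at hyx
    exact lt_of_le_of_ne (not_lt.mp fun hlt => hyx hlt hxy) fun h => T.irrefl x (hf h ▸ hxy)
  | succ n ih =>
    obtain ⟨⟨a, b⟩, hab⟩ := card_pos.mp (by omega : 0 < #(backArcs f T))
    obtain ⟨Xs, hXs⟩ := ih (T.inv {a, b}) (by simp [backArcs_inv_pair hf hab, hn, hab])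
    exact ⟨{a, b} :: Xs, hXs⟩

theorem index_le_length {T : Tournament V} {Xs : List (Set V)} (h : (T.invSeq Xs).IsAcyclic) :
    T.index ≤ Xs.length :=
  Nat.sInf_le ⟨Xs, rfl, h⟩

theorem exists_length_eq_index [Finite V] (T : Tournament V) :
    ∃ Xs : List (Set V), Xs.length = T.index ∧ (T.invSeq Xs).IsAcyclic := by
  obtain ⟨Xs, h⟩ := T.exists_isAcyclic_invSeq
  exact Nat.sInf_mem (s := {m | ∃ Xs : List (Set V), Xs.length = m ∧ (T.invSeq Xs).IsAcyclic})
    ⟨_, Xs, rfl, h⟩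

theorem index_eq_zero_of_isEmpty [IsEmpty V] (T : Tournament V) : T.index = 0 :=
  Nat.le_zero.mp (index_le_length (Xs := []) fun x => isEmptyElim x)

theorem index_le_of_embeds [Finite W] {S : Tournament V} {T : Tournament W} (h : S.Embeds T) :
    S.index ≤ T.index := by
  obtain ⟨f, -, hrel⟩ := h
  obtain ⟨Xs, hlen, hXs⟩ := T.exists_length_eq_index
  calc S.index ≤ (Xs.map (f ⁻¹' ·)).length := index_le_length fun x y z => by
        simp only [invSeq_map_preimage_rel_iff hrel]
        exact hXs _ _ _
    _ = T.index := by rw [List.length_map, hlen]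

theorem exists_isAcyclic_invSeq_ofFn [Finite V] {T : Tournament V} {m : ℕ} (h : T.index ≤ m) :
    ∃ g : Fin m → Set V, (T.invSeq (List.ofFn g)).IsAcyclic := by
  obtain ⟨Xs, hlen, hXs⟩ := T.exists_length_eq_index
  obtain ⟨Ys, hYs, rfl⟩ : ∃ Ys : List (Set V), (T.invSeq Ys).IsAcyclic ∧ Ys.length = m :=
    ⟨Xs ++ List.replicate (m - T.index) ∅, by rwa [invSeq_append, invSeq_replicate_empty],
      by simp [hlen, h]⟩
  exact ⟨Ys.get, by rwa [List.ofFn_get]⟩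

section Words

variable {A : Type*} (D : A → A → Prop)

def ofWord {n : ℕ} (u : Fin n → A) : Tournament (Fin n) where
  rel i j := (i < j ∧ D (u i) (u j)) ∨ (j < i ∧ ¬ D (u j) (u i))
  irrefl i := by simp
  total i j h := by
    by_cases hD : D (u i) (u j) <;> by_cases hD' : D (u j) (u i) <;>
      rcases lt_or_gt_of_ne h with h | h <;> tauto
  asymm i j := by
    rintro (⟨h, _⟩ | ⟨h, _⟩) (⟨h', _⟩ | ⟨h', _⟩) <;> first | exact h.asymm h' | contradiction

variable {D}

theorem ofWord_rel_of_lt {n : ℕ} {u : Fin n → A} {i j : Fin n} (hij : i < j) :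
    (ofWord D u).rel i j ↔ D (u i) (u j) := by
  simp [ofWord, hij, hij.asymm]

theorem ofWord_rel_of_gt {n : ℕ} {u : Fin n → A} {i j : Fin n} (hij : j < i) :
    (ofWord D u).rel i j ↔ ¬ D (u j) (u i) := by
  simp [ofWord, hij, hij.asymm]

theorem ofWord_embeds_of_sublist {n n' : ℕ} {u : Fin n → A} {u' : Fin n' → A}
    (h : (List.ofFn u).Sublist (List.ofFn u')) : (ofWord D u).Embeds (ofWord D u') := by
  obtain ⟨φ, hφ⟩ := List.sublist_iff_exists_fin_orderEmbedding_get_eq.mp h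
  let ψ : Fin n ↪o Fin n' :=
    (Fin.castOrderIso (List.length_ofFn)).symm.toOrderEmbedding.trans
      (φ.trans (Fin.castOrderIso List.length_ofFn).toOrderEmbedding)
  have hψ : ∀ i, u' (ψ i) = u i := fun i => by
    simpa [ψ, Fin.cast] using (hφ (Fin.cast List.length_ofFn.symm i)).symm
  refine ⟨ψ, ψ.injective, fun i j => ?_⟩
  simp only [ofWord, hψ, ψ.lt_iff_lt]

end Words

def evenInter {ι : Type*} (a b : Finset ι) : Prop := Even #(a ∩ b)

theorem exists_iso_ofWord_evenInter [Finite V] {T : Tournament V} {m : ℕ} (h : T.index ≤ m) :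
    ∃ (n : ℕ) (u : Fin n → Finset (Fin m)), (ofWord evenInter u).Iso T := by
  obtain ⟨g, hg⟩ := exists_isAcyclic_invSeq_ofFn h
  obtain ⟨n, e, he⟩ := hg.exists_equiv_fin
  refine ⟨n, fun i => {k | e i ∈ g k}, e, fun i j => ?_⟩
  rcases eq_or_ne i j with rfl | hij
  · exact iff_of_false ((ofWord _ _).irrefl i) (T.irrefl _)
  have key := invSeq_ofFn_rel_iff T g (e.injective.ne hij)
  rw [he] at key
  rcases hij.lt_or_gt with hlt | hgt
  · rw [ofWord_rel_of_lt hlt, evenInter, ← filter_and]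
    simp only [hlt, true_iff] at key
    exact key.symm
  · simp only [ofWord_rel_of_gt hgt, evenInter, ← filter_and, hgt.not_gt, false_iff] at key ⊢
    simp only [and_comm (a := e j ∈ _)]
    tauto

/-- `none` stands for an extra vertex `v`, placed first; the `Prop` of any other letter records
whether `v` points to its vertex. -/
def extendDecoder {A : Type*} (D : A → A → Prop) : Option (A × Prop) → Option (A × Prop) → Prop
  | some a, some b => D a.1 b.1
  | none, some b => b.2
  | _, none => True

theorem exists_iso_ofWord_extendDecoder {A : Type*} {D : A → A → Prop} {T : Tournament V}
    {v : V} {n : ℕ} {u : Fin n → A} (h : (ofWord D u).Iso (T.erase v)) :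
    ∃ u' : Fin (n + 1) → Option (A × Prop), (ofWord (extendDecoder D) u').Iso T := by
  obtain ⟨e, he⟩ := h
  refine ⟨Fin.cons none fun i => some (u i, T.rel v (e i)),
    (finSuccEquiv n).trans ((Equiv.optionCongr e).trans (Equiv.optionSubtypeNe v)),
    fun i j => ?_⟩
  cases i using Fin.cases <;> cases j using Fin.cases
  · exact iff_of_false ((ofWord _ _).irrefl 0) (T.irrefl v)
  · simp [ofWord_rel_of_lt (Fin.succ_pos _), extendDecoder]
  · simp [ofWord_rel_of_gt (Fin.succ_pos _), extendDecoder, rel_iff_not_rel (e _).2]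
  · simpa [ofWord, extendDecoder, erase, restrict] using he _ _

theorem exists_lt_embeds_of_iso_ofWord {A : Type*} [Finite A] {D : A → A → Prop}
    {V : ℕ → Type*} {S : ∀ n, Tournament (V n)}
    (hS : ∀ n, ∃ (k : ℕ) (u : Fin k → A), (ofWord D u).Iso (S n)) :
    ∃ i j, i < j ∧ (S i).Embeds (S j) := by
  choose k u hu using hS
  obtain ⟨i, j, hij, hsub⟩ :=
    (Set.finite_univ.partiallyWellOrderedOn (r := (· = ·))).partiallyWellOrderedOn_sublistForall₂
      (· = ·) fun n => ⟨List.ofFn (u n), fun _ _ => Set.mem_univ _⟩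
  change List.SublistForall₂ (· = ·) (List.ofFn (u i)) (List.ofFn (u j)) at hsub
  rw [List.sublistForall₂_iff, List.forall₂_eq_eq_eq] at hsub
  obtain ⟨_, rfl, hsub⟩ := hsub
  exact ⟨i, j, hij, (hu i).symm.embeds.trans ((ofWord_embeds_of_sublist hsub).trans (hu j).embeds)⟩

/-- `T` is a bound of the class of tournaments of index at most `m`. Since the index is monotone
under embedding, deleting single vertices suffices. -/
def IsBound (m : ℕ) (T : Tournament V) : Prop :=
  m < T.index ∧ ∀ v, (T.erase v).index ≤ m

theorem IsBound.exists_iso_ofWord [Finite V] {T : Tournament V} {m : ℕ} (hT : T.IsBound m) :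
    ∃ (n : ℕ) (u : Fin n → Option (Finset (Fin m) × Prop)),
      (ofWord (extendDecoder evenInter) u).Iso T := by
  obtain ⟨v⟩ : Nonempty V := by
    by_contra hV
    have := not_nonempty_iff.mp hV
    exact Nat.not_lt_zero m (T.index_eq_zero_of_isEmpty ▸ hT.1)
  obtain ⟨n, u, hu⟩ := exists_iso_ofWord_evenInter (hT.2 v)
  exact ⟨n + 1, exists_iso_ofWord_extendDecoder hu⟩

theorem not_embeds_of_isBound_of_card_lt [Finite W] {S : Tournament V} {T : Tournament W}
    {m : ℕ} (hS : m < S.index) (hT : T.IsBound m) (hcard : Nat.card V < Nat.card W) :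
    ¬ S.Embeds T := fun h =>
  let ⟨w, hw⟩ := h.exists_embeds_erase hcard
  hS.not_ge ((index_le_of_embeds hw).trans (hT.2 w))

theorem exists_card_le_of_isBound (m : ℕ) :
    ∃ N, ∀ (k : ℕ) (S : Tournament (Fin k)), S.IsBound m → k ≤ N := by
  by_contra! h
  obtain ⟨φ, hφ, hbound⟩ := Filter.extraction_of_frequently_atTop
    (P := fun k => ∃ S : Tournament (Fin k), S.IsBound m) <| Filter.frequently_atTop.mpr
      fun N => let ⟨k, S, hS, hNk⟩ := h N; ⟨k, hNk.le, S, hS⟩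
  choose S hS using hbound
  obtain ⟨i, j, hij, hemb⟩ := exists_lt_embeds_of_iso_ofWord fun n => (hS n).exists_iso_ofWord
  exact not_embeds_of_isBound_of_card_lt (hS i).1 (hS j) (by simpa using hφ hij) hemb

theorem exists_isBound_embeds [Finite V] {T : Tournament V} {m : ℕ} (hT : m < T.index) :
    ∃ (k : ℕ) (S : Tournament (Fin k)), S.IsBound m ∧ S.Embeds T := by
  have hP : ∃ k, ∃ S : Tournament (Fin k), m < S.index ∧ S.Embeds T := by
    obtain ⟨n, ⟨e⟩⟩ := Finite.exists_equiv_fin V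
    exact ⟨n, T.comap e.symm e.symm.injective,
      hT.trans_le (index_le_of_embeds (T.embeds_comap_equiv e.symm)), T.comap_embeds _⟩
  obtain ⟨S, hS, hST⟩ := Nat.find_spec hP
  refine ⟨_, S, ⟨hS, fun v => not_lt.mp fun hv => ?_⟩, hST⟩
  obtain ⟨n, ⟨e⟩⟩ := Finite.exists_equiv_fin {w // w ≠ v}
  have hn : n < Nat.find hP := by
    simpa only [Nat.card_congr e, Nat.card_fin] using
      Finite.card_subtype_lt (p := (· ≠ v)) (not_not.mpr rfl)
  exact Nat.find_min hP hn ⟨(S.erase v).comap e.symm e.symm.injective,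
    hv.trans_le (index_le_of_embeds (embeds_comap_equiv _ _)),
    (comap_embeds _ _).trans ((erase_embeds S v).trans hST)⟩

theorem finite_setOf_fst_le (N : ℕ) : {p : Σ k, Tournament (Fin k) | p.1 ≤ N}.Finite :=
  (Set.finite_range fun p : Σ k : Fin (N + 1), Tournament (Fin k) =>
    (⟨p.1, p.2⟩ : Σ k : ℕ, Tournament (Fin k))).subset
      fun ⟨k, S⟩ hk => ⟨⟨⟨k, Nat.lt_succ_of_le hk⟩, S⟩, rfl⟩

end Tournament

/-- for every `m` there is a finite set `B` of finite tournaments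
such that a finite tournament has inversion index at most `m` iff no member of `B`
embeds into it. -/
theorem finitely_many_bounds (m : ℕ) :
    ∃ (r : ℕ) (B : Fin r → (Σ k : ℕ, Tournament (Fin k))),
      ∀ (V : Type*) (_ : Fintype V) (T : Tournament V),
        T.index ≤ m ↔ ∀ j : Fin r, ¬ (B j).2.Embeds T := by
  obtain ⟨N, hN⟩ := Tournament.exists_card_le_of_isBound m
  obtain ⟨r, B, hB⟩ := ((Tournament.finite_setOf_fst_le N).subset
    fun p (hp : p.1 ≤ N ∧ m < p.2.index) => hp.1).fin_embedding
  refine ⟨r, B, fun V _ T => ⟨fun hT j hj => ?_, fun h => ?_⟩⟩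
  · have hBj : B j ∈ Set.range B := Set.mem_range_self j
    rw [hB] at hBj
    exact (hBj.2.trans_le (Tournament.index_le_of_embeds hj)).not_ge hT
  · by_contra! hT
    obtain ⟨k, S, hS, hST⟩ := Tournament.exists_isBound_embeds hT
    obtain ⟨j, hj⟩ : (⟨k, S⟩ : Σ k, Tournament (Fin k)) ∈ Set.range B :=
      hB ▸ ⟨hN k S hS, hS.1⟩
    exact h j (hj ▸ hST)
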